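/- The inhomogeneous-coordinate bracket {f,g} = ∂_{v^{α̇}}f ∂^{v}_{α̇}g + Λ(v^{α̇}∂_{v^{α̇}}f ∂_z g − 2 f ∂_z g − v^{α̇}∂_{v^{α̇}}g ∂_z f + 2 g ∂_z f) is antisymmetric and satisfies the Jacobi identity on smooth (polynomial) functions of (v⁰, v¹, z), i.e. it is a Jacobi bracket; but for Λ ≠ 0 it fails the Leibniz rule: there exist f, g, h with {f, gh} ≠ {f,g}h + g{f,h}. -/

import Mathlib

/-!
Antisymmetry is visible from the formula, and the Jacobi identity is a polynomial identity in
the partial derivatives of `f, g, h` of order at most two, which holds once mixed partials are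
identified. The bracket is not a biderivation because of the `−2f` term: the Leibniz rule at
`g = h = 1` would force `{f, 1} = 0`, whereas `{f, 1} = 2Λ ∂_z f`.
-/

open MvPolynomial

/-- The inhomogeneous-coordinate Jacobi bracket on `K[v⁰, v¹, z]`
(variables indexed `0 = v⁰, 1 = v¹, 2 = z`):
`{f,g}_Λ = ∂_{v⁰}f ∂_{v¹}g − ∂_{v¹}f ∂_{v⁰}g
  + Λ((v⁰∂_{v⁰}f + v¹∂_{v¹}f − 2f)∂_z g − (v⁰∂_{v⁰}g + v¹∂_{v¹}g − 2g)∂_z f)`. -/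
noncomputable def jb {K : Type*} [Field K] [CharZero K] (Λ : K)
    (f g : MvPolynomial (Fin 3) K) : MvPolynomial (Fin 3) K :=
  pderiv 0 f * pderiv 1 g - pderiv 1 f * pderiv 0 g
    + C Λ * ((X 0 * pderiv 0 f + X 1 * pderiv 1 f - 2 * f) * pderiv 2 g
           - (X 0 * pderiv 0 g + X 1 * pderiv 1 g - 2 * g) * pderiv 2 f)

theorem Derivation.map_ofNat {R A M : Type*} [CommSemiring R] [CommSemiring A] [Algebra R A]
    [AddCommMonoid M] [Module A M] [Module R M] (D : Derivation R A M) (n : ℕ) [n.AtLeastTwo] :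
    D (ofNat(n) : A) = 0 :=
  D.map_natCast n

theorem MvPolynomial.pderiv_pderiv_comm {σ R : Type*} [CommRing R] (i j : σ)
    (f : MvPolynomial σ R) : pderiv i (pderiv j f) = pderiv j (pderiv i f) := by
  classical
  have h : ⁅pderiv i, pderiv j⁆ = (0 : Derivation R (MvPolynomial σ R) (MvPolynomial σ R)) :=
    derivation_ext fun k => by
      rw [Derivation.commutator_apply]
      simp [pderiv_X, Pi.single_apply, apply_ite]
  rw [← sub_eq_zero, ← Derivation.commutator_apply, h, Derivation.zero_apply]

section

variable {K : Type*} [Field K] [CharZero K] (Λ : K)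

theorem jb_antisymm (f g : MvPolynomial (Fin 3) K) : jb Λ f g = -jb Λ g f := by
  unfold jb
  ring

theorem jb_jacobi (f g h : MvPolynomial (Fin 3) K) :
    jb Λ f (jb Λ g h) + jb Λ g (jb Λ h f) + jb Λ h (jb Λ f g) = 0 := by
  simp only [jb, map_add, map_sub, pderiv_mul, pderiv_C, pderiv_X, Pi.single_apply,
    Derivation.map_ofNat, pderiv_pderiv_comm (1 : Fin 3) 0, pderiv_pderiv_comm (2 : Fin 3) 0,
    pderiv_pderiv_comm (2 : Fin 3) 1, Fin.reduceEq, if_true, if_false]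
  ring

theorem jb_one_right (f : MvPolynomial (Fin 3) K) : jb Λ f 1 = 2 * C Λ * pderiv 2 f := by
  simp only [jb, Derivation.map_one_eq_zero, mul_zero, mul_one]
  ring

end

/-- The inhomogeneous bracket is antisymmetric and satisfies the Jacobi
identity (it is a Jacobi bracket), but for `Λ ≠ 0` it fails the Leibniz rule. -/
theorem jacobi_bracket_not_poisson {K : Type*} [Field K] [CharZero K] (Λ : K) :
    (∀ f g : MvPolynomial (Fin 3) K, jb Λ f g = - jb Λ g f) ∧
    (∀ f g h : MvPolynomial (Fin 3) K,
      jb Λ f (jb Λ g h) + jb Λ g (jb Λ h f) + jb Λ h (jb Λ f g) = 0) ∧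
    (Λ ≠ 0 → ∃ f g h : MvPolynomial (Fin 3) K,
      jb Λ f (g * h) ≠ jb Λ f g * h + g * jb Λ f h) := by
  refine ⟨jb_antisymm Λ, jb_jacobi Λ, fun hΛ => ⟨X 2, 1, 1, ?_⟩⟩
  rw [mul_one, mul_one, one_mul, jb_one_right, pderiv_X_self, mul_one, ne_eq, left_eq_add]
  exact mul_ne_zero two_ne_zero (C_ne_zero.mpr hΛ)
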